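/- Let f, g be nonnegative measurable functions on a σ-finite measure space with f, g ∈ L₁ + L_∞. Then g is submajorized by f (i.e. ∫₀^s μ(u,g) du ≤ ∫₀^s μ(u,f) du for all s > 0) if and only if ∫ (g − t)₊ ≤ ∫ (f − t)₊ for all t > 0. -/

import Mathlib

open MeasureTheory

/-- Decreasing rearrangement of `f` with respect to the measure `ν`. -/
noncomputable def decRearr {α : Type*} [MeasurableSpace α] (ν : Measure α)
    (f : α → ℝ) (t : ℝ) : ℝ :=
  sInf {s : ℝ | 0 < s ∧ ν {u | s < |f u|} ≤ ENNReal.ofReal t}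

/-!
Write `f*` for the decreasing rearrangement. The hypothesis `f ∈ L₁ + L_∞` makes `μ(|f| > s) → 0`
as `s → ∞`, so `f*` is finite, decreasing on `(0, ∞)` and equimeasurable with `|f|`; the layer-cake
formula then gives `∫ (f - t)₊ dμ = ∫₀^∞ (f* - t)₊`.
For a decreasing `k` on `(0, ∞)` the two families of integrals are Legendre dual to each other:
`∫₀^∞ (k - t)₊ = sup_s (∫₀^s k - s t)`, the supremum being attained where `k` crosses the level `t`,
and `∫₀^s k = inf_t (s t + ∫₀^∞ (k - t)₊)`, the infimum being approached as `t ↓ k(s)`.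
Hence an inequality between either family for `g*` and `f*` implies the one for the other family.
-/

open Set Filter Topology
open scoped ENNReal

section RealVariable

variable {k : ℝ → ℝ} {s t : ℝ}

theorem ENNReal.ofReal_add_ofReal_max_sub (ht : 0 ≤ t) (a : ℝ) :
    ENNReal.ofReal t + ENNReal.ofReal (max (a - t) 0) = ENNReal.ofReal (max a t) := by
  rw [← ENNReal.ofReal_add ht (le_max_right _ _), ← max_add_add_left, add_sub_cancel, add_zero,
    max_comm]

theorem setLIntegral_Ioo_ofReal_max (ht : 0 ≤ t) :
    ∫⁻ u in Ioo 0 s, ENNReal.ofReal (max (k u) t) =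
      ENNReal.ofReal s * ENNReal.ofReal t + ∫⁻ u in Ioo 0 s, ENNReal.ofReal (max (k u - t) 0) := by
  simp_rw [← ENNReal.ofReal_add_ofReal_max_sub ht]
  rw [lintegral_add_left measurable_const, setLIntegral_const, Real.volume_Ioo, sub_zero, mul_comm]

theorem setLIntegral_Ioo_ofReal_le (ht : 0 ≤ t) :
    ∫⁻ u in Ioo 0 s, ENNReal.ofReal (k u) ≤
      ENNReal.ofReal s * ENNReal.ofReal t + ∫⁻ u in Ioi 0, ENNReal.ofReal (max (k u - t) 0) :=
  calc ∫⁻ u in Ioo 0 s, ENNReal.ofReal (k u)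
      ≤ ∫⁻ u in Ioo 0 s, ENNReal.ofReal (max (k u) t) :=
        lintegral_mono fun u => ENNReal.ofReal_le_ofReal (le_max_left _ _)
    _ ≤ _ := by
        rw [setLIntegral_Ioo_ofReal_max ht]
        gcongr
        exact Ioo_subset_Ioi_self

theorem setLIntegral_le_of_ae_eq_zero {α : Type*} [MeasurableSpace α] {μ : Measure α}
    {S T : Set α} {F : α → ℝ≥0∞} (hS : MeasurableSet S) (hT : MeasurableSet T)
    (hF : ∀ᵐ x ∂μ, x ∈ T → x ∉ S → F x = 0) :
    ∫⁻ x in T, F x ∂μ ≤ ∫⁻ x in S, F x ∂μ :=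
  calc ∫⁻ x in T, F x ∂μ ≤ ∫⁻ x in T, S.indicator F x ∂μ := by
        refine setLIntegral_mono_ae' hT ?_
        filter_upwards [hF] with x hx hxT
        by_cases hxS : x ∈ S
        · rw [indicator_of_mem hxS]
        · rw [hx hxT hxS]; exact zero_le
    _ ≤ ∫⁻ x, S.indicator F x ∂μ := setLIntegral_le_lintegral _ _
    _ = ∫⁻ x in S, F x ∂μ := lintegral_indicator hS F

theorem AntitoneOn.exists_level_crossing (hk : AntitoneOn k (Ioi 0)) (t : ℝ) (hs : 0 ≤ s) :
    ∃ r ∈ Icc 0 s, (∀ u ∈ Ioo 0 r, t ≤ k u) ∧ ∀ u ∈ Ioo r s, k u ≤ t := by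
  set S := {u ∈ Ioo 0 s | t ≤ k u}
  have hbdd : BddAbove S := ⟨s, fun u hu => hu.1.2.le⟩
  refine ⟨sSup S, ⟨Real.sSup_nonneg fun u hu => hu.1.1.le, Real.sSup_le (fun u hu => hu.1.2.le) hs⟩,
    fun u hu => ?_, fun u hu => ?_⟩
  · have hne : S.Nonempty := by
      by_contra h
      rw [not_nonempty_iff_eq_empty.1 h, Real.sSup_empty] at hu
      exact absurd hu.2 hu.1.not_gt
    obtain ⟨x, hxS, hux⟩ := exists_lt_of_lt_csSup hne hu.2
    exact hxS.2.trans (hk hu.1 hxS.1.1 hux.le)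
  · refine le_of_not_gt fun htu => hu.1.not_ge (le_csSup hbdd ⟨⟨?_, hu.2⟩, htu.le⟩)
    exact (Real.sSup_nonneg fun u hu => hu.1.1.le).trans_lt hu.1

theorem setLIntegral_Ioo_max_sub_le_iSup (hk : AntitoneOn k (Ioi 0)) (ht : 0 ≤ t) (hs : 0 ≤ s) :
    ∫⁻ u in Ioo 0 s, ENNReal.ofReal (max (k u - t) 0) ≤
      ⨆ r > 0, (∫⁻ u in Ioo 0 r, ENNReal.ofReal (k u)) - ENNReal.ofReal r * ENNReal.ofReal t := by
  obtain ⟨r, ⟨hr0, -⟩, hge, hle⟩ := hk.exists_level_crossing t hs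
  have hsplit : ∫⁻ u in Ioo 0 r, ENNReal.ofReal (k u) =
      ENNReal.ofReal r * ENNReal.ofReal t + ∫⁻ u in Ioo 0 r, ENNReal.ofReal (max (k u - t) 0) := by
    rw [← setLIntegral_Ioo_ofReal_max ht]
    exact setLIntegral_congr_fun measurableSet_Ioo fun u hu => by rw [max_eq_left (hge u hu)]
  calc ∫⁻ u in Ioo 0 s, ENNReal.ofReal (max (k u - t) 0)
      ≤ ∫⁻ u in Ioo 0 r, ENNReal.ofReal (max (k u - t) 0) := by
        refine setLIntegral_le_of_ae_eq_zero measurableSet_Ioo measurableSet_Ioo ?_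
        filter_upwards [volume.ae_ne r] with u hur hus hur'
        have hru : r < u := lt_of_le_of_ne (not_lt.1 fun h => hur' ⟨hus.1, h⟩) hur.symm
        rw [max_eq_right (sub_nonpos.2 (hle u ⟨hru, hus.2⟩)), ENNReal.ofReal_zero]
    _ = (∫⁻ u in Ioo 0 r, ENNReal.ofReal (k u)) - ENNReal.ofReal r * ENNReal.ofReal t :=
        (ENNReal.sub_eq_of_eq_add_rev (by finiteness) hsplit).symm
    _ ≤ _ := by
        obtain rfl | hr := hr0.eq_or_lt
        · simp
        · exact le_iSup₂_of_le r hr le_rfl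

theorem lintegral_max_sub_eq_iSup (hk : AntitoneOn k (Ioi 0)) (ht : 0 ≤ t) :
    ∫⁻ u in Ioi 0, ENNReal.ofReal (max (k u - t) 0) =
      ⨆ s > 0, (∫⁻ u in Ioo 0 s, ENNReal.ofReal (k u)) - ENNReal.ofReal s * ENNReal.ofReal t := by
  refine le_antisymm ?_ (iSup₂_le fun s _ => tsub_le_iff_left.2 (setLIntegral_Ioo_ofReal_le ht))
  have hIoi : Ioi (0 : ℝ) = ⋃ n : ℕ, Ioo 0 (n : ℝ) := by
    ext u
    simp only [mem_Ioi, mem_iUnion, mem_Ioo]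
    exact ⟨fun hu => (exists_nat_gt u).imp fun _ hn => ⟨hu, hn⟩, fun ⟨_, hu, _⟩ => hu⟩
  have hmono : Monotone fun n : ℕ => Ioo (0 : ℝ) n :=
    fun _ _ hnm => Ioo_subset_Ioo_right (Nat.cast_le.2 hnm)
  rw [hIoi, setLIntegral_iUnion_of_directed _ hmono.directed_le]
  exact iSup_le fun n => setLIntegral_Ioo_max_sub_le_iSup hk ht n.cast_nonneg

theorem setLIntegral_Ioo_eq_iInf (hk : AntitoneOn k (Ioi 0)) (hs : 0 < s) (hks : 0 ≤ k s) :
    ∫⁻ u in Ioo 0 s, ENNReal.ofReal (k u) =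
      ⨅ t > 0, ENNReal.ofReal s * ENNReal.ofReal t +
        ∫⁻ u in Ioi 0, ENNReal.ofReal (max (k u - t) 0) := by
  refine le_antisymm (le_iInf₂ fun t ht => setLIntegral_Ioo_ofReal_le ht.le) ?_
  refine ENNReal.le_of_forall_pos_le_add fun ε hε _ => ?_
  have hδ : 0 < (ε : ℝ) / s := div_pos hε hs
  -- Beyond `s` the integrand vanishes, and before `s` we have `max (k u) t ≤ k u + ε / s`.
  set t := k s + ε / s
  have ht : 0 < t := add_pos_of_nonneg_of_pos hks hδ
  refine iInf₂_le_of_le t ht ?_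
  calc ENNReal.ofReal s * ENNReal.ofReal t + ∫⁻ u in Ioi 0, ENNReal.ofReal (max (k u - t) 0)
      ≤ ENNReal.ofReal s * ENNReal.ofReal t +
          ∫⁻ u in Ioo 0 s, ENNReal.ofReal (max (k u - t) 0) := by
        gcongr 1
        refine setLIntegral_le_of_ae_eq_zero measurableSet_Ioo measurableSet_Ioi
          (ae_of_all _ fun u hu hus => ?_)
        have hsu : s ≤ u := not_lt.1 fun h => hus ⟨hu, h⟩
        rw [max_eq_right (sub_nonpos.2 ((hk hs hu hsu).trans (le_add_of_nonneg_right hδ.le))),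
          ENNReal.ofReal_zero]
    _ = ∫⁻ u in Ioo 0 s, ENNReal.ofReal (max (k u) t) := (setLIntegral_Ioo_ofReal_max ht.le).symm
    _ ≤ ∫⁻ u in Ioo 0 s, (ENNReal.ofReal (k u) + ENNReal.ofReal (ε / s)) := by
        refine setLIntegral_mono' measurableSet_Ioo fun u hu => ?_
        refine (ENNReal.ofReal_le_ofReal (max_le (le_add_of_nonneg_right hδ.le) ?_)).trans
          ENNReal.ofReal_add_le
        exact (add_le_add_iff_right _).2 (hk hu.1 hs hu.2.le)
    _ = (∫⁻ u in Ioo 0 s, ENNReal.ofReal (k u)) + ε := by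
        rw [lintegral_add_right _ measurable_const, setLIntegral_const, Real.volume_Ioo, sub_zero,
          ← ENNReal.ofReal_mul hδ.le, div_mul_cancel₀ _ hs.ne', ENNReal.ofReal_coe_nnreal]

end RealVariable

section Distribution

variable {α : Type*} [MeasurableSpace α] {ν : Measure α} {f g : α → ℝ} {s : ℝ}

noncomputable def distribution (ν : Measure α) (f : α → ℝ) (s : ℝ) : ℝ≥0∞ :=
  ν {x | s < |f x|}

theorem distribution_anti : Antitone (distribution ν f) :=
  fun _ _ hst => measure_mono fun _ hx => lt_of_le_of_lt hst hx

theorem distribution_le_of_forall_gt {c : ℝ≥0∞} (h : ∀ r > s, distribution ν f r ≤ c) :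
    distribution ν f s ≤ c := by
  have hU : {x | s < |f x|} = ⋃ n : ℕ, {x | s + 1 / (n + 1) < |f x|} := by
    ext x
    simp only [mem_ofPred_eq, mem_iUnion]
    refine ⟨fun hx => ?_, fun ⟨n, hn⟩ => (lt_add_of_pos_right s (by positivity)).trans hn⟩
    obtain ⟨n, hn⟩ := exists_nat_one_div_lt (sub_pos.2 hx)
    exact ⟨n, by linarith⟩
  have hmono : Monotone fun n : ℕ => {x | s + 1 / (n + 1 : ℝ) < |f x|} :=
    fun _ _ hnm _ hx => lt_of_le_of_lt ((add_le_add_iff_left s).2 (Nat.one_div_le_one_div hnm)) hx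
  rw [distribution, hU, hmono.measure_iUnion]
  exact iSup_le fun n => h _ (lt_add_of_pos_right s (by positivity))

theorem distribution_add_le (a b : ℝ) :
    distribution ν (f + g) (a + b) ≤ distribution ν f a + distribution ν g b := by
  refine (measure_mono fun x hx => ?_).trans (measure_union_le _ _)
  by_contra h
  simp only [mem_union, mem_ofPred_eq, not_or, not_lt, Pi.add_apply] at h hx
  linarith [abs_add_le (f x) (g x)]

theorem distribution_eq_zero_of_ae_abs_le {C : ℝ} (h : ∀ᵐ x ∂ν, |f x| ≤ C) :
    distribution ν f C = 0 :=
  measure_eq_zero_iff_ae_notMem.2 (h.mono fun _ hx => hx.not_gt)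

theorem tendsto_distribution_of_integrable (hf : Integrable f ν) :
    Tendsto (distribution ν f) atTop (𝓝 0) := by
  have hI : ∫⁻ x, ‖f x‖ₑ ∂ν ≠ ∞ := hf.2.ne
  have hbound : ∀ s > 0, distribution ν f s ≤ (∫⁻ x, ‖f x‖ₑ ∂ν) / ENNReal.ofReal s := fun s hs =>
    calc distribution ν f s ≤ ν {x | ENNReal.ofReal s ≤ ‖f x‖ₑ} := measure_mono fun x hx => by
          simp only [mem_ofPred_eq, Real.enorm_eq_ofReal_abs] at hx ⊢
          exact ENNReal.ofReal_le_ofReal hx.le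
      _ ≤ _ := meas_ge_le_lintegral_div hf.1.enorm (by simpa using hs) ENNReal.ofReal_ne_top
  have hlim : Tendsto (fun s => (∫⁻ x, ‖f x‖ₑ ∂ν) / ENNReal.ofReal s) atTop (𝓝 0) := by
    simpa using ENNReal.Tendsto.const_div ENNReal.tendsto_ofReal_atTop (Or.inr hI)
  exact tendsto_of_tendsto_of_tendsto_of_le_of_le' tendsto_const_nhds hlim
    (Eventually.of_forall fun _ => zero_le) ((eventually_gt_atTop 0).mono hbound)

theorem tendsto_distribution_add_of_eq_zero {C : ℝ} (hf : Tendsto (distribution ν f) atTop (𝓝 0))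
    (hg : distribution ν g C = 0) : Tendsto (distribution ν (f + g)) atTop (𝓝 0) := by
  refine tendsto_of_tendsto_of_tendsto_of_le_of_le tendsto_const_nhds
    (hf.comp (tendsto_atTop_add_const_right _ (-C) tendsto_id))
    (fun _ => zero_le) fun s => ?_
  simpa [hg, ← sub_eq_add_neg] using distribution_add_le (ν := ν) (f := f) (g := g) (s - C) C

theorem tendsto_distribution_of_memLp_one_add_top {f₁ f₂ : α → ℝ} (h₁ : MemLp f₁ 1 ν)
    (h₂ : MemLp f₂ ⊤ ν) : Tendsto (distribution ν (f₁ + f₂)) atTop (𝓝 0) := by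
  have hfin : eLpNormEssSup f₂ ν ≠ ∞ := by simpa only [eLpNorm_exponent_top] using h₂.2.ne
  refine tendsto_distribution_add_of_eq_zero
    (tendsto_distribution_of_integrable (memLp_one_iff_integrable.1 h₁))
    (distribution_eq_zero_of_ae_abs_le (C := (eLpNormEssSup f₂ ν).toReal) ?_)
  filter_upwards [ae_le_eLpNormEssSup (f := f₂) (μ := ν)] with x hx
  rw [← Real.norm_eq_abs, ← toReal_enorm]
  exact ENNReal.toReal_mono hfin hx

end Distribution

section Rearrangement

variable {α : Type*} [MeasurableSpace α] {ν : Measure α} {f : α → ℝ} {s t u : ℝ}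

theorem decRearr_nonneg (u : ℝ) : 0 ≤ decRearr ν f u :=
  Real.sInf_nonneg fun _ hr => hr.1.le

theorem exists_distribution_le (hf : Tendsto (distribution ν f) atTop (𝓝 0)) (hu : 0 < u) :
    ∃ r, 0 < r ∧ distribution ν f r ≤ ENNReal.ofReal u :=
  (((hf.eventually (ge_mem_nhds (ENNReal.ofReal_pos.2 hu))).and
    (eventually_gt_atTop 0)).exists).imp fun _ h => ⟨h.2, h.1⟩

theorem decRearr_le_iff (hf : Tendsto (distribution ν f) atTop (𝓝 0)) (hu : 0 < u) (hs : 0 < s) :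
    decRearr ν f u ≤ s ↔ distribution ν f s ≤ ENNReal.ofReal u := by
  refine ⟨fun h => distribution_le_of_forall_gt fun r hr => ?_,
    fun h => csInf_le ⟨0, fun _ hr => hr.1.le⟩ ⟨hs, h⟩⟩
  obtain ⟨q, hq, hqr⟩ := exists_lt_of_csInf_lt (exists_distribution_le hf hu) (h.trans_lt hr)
  exact (distribution_anti hqr.le).trans hq.2

theorem antitoneOn_decRearr (hf : Tendsto (distribution ν f) atTop (𝓝 0)) :
    AntitoneOn (decRearr ν f) (Ioi 0) := fun _ hu _ _ huv =>
  csInf_le_csInf ⟨0, fun _ hr => hr.1.le⟩ (exists_distribution_le hf hu)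
    fun _ hr => ⟨hr.1, hr.2.trans (ENNReal.ofReal_le_ofReal huv)⟩

theorem volume_setOf_ofReal_lt (c : ℝ≥0∞) :
    volume {u : ℝ | 0 < u ∧ ENNReal.ofReal u < c} = c := by
  induction c with
  | top =>
    simp only [ENNReal.ofReal_lt_top, and_true]
    exact Real.volume_Ioi
  | coe c =>
    have hIoo : {u : ℝ | 0 < u ∧ ENNReal.ofReal u < c} = Ioo 0 (c : ℝ) := by
      ext u
      simp only [mem_ofPred_eq, mem_Ioo, and_congr_right_iff]
      exact fun hu => ENNReal.ofReal_lt_iff_lt_toReal hu.le ENNReal.coe_ne_top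
    rw [hIoo, Real.volume_Ioo, sub_zero, ENNReal.ofReal_coe_nnreal]

theorem volume_lt_decRearr (hf : Tendsto (distribution ν f) atTop (𝓝 0)) (hs : 0 < s) :
    volume {u | 0 < u ∧ s < decRearr ν f u} = distribution ν f s := by
  rw [← volume_setOf_ofReal_lt (distribution ν f s)]
  congr 1
  ext u
  simp only [mem_ofPred_eq, and_congr_right_iff]
  exact fun hu => by rw [← not_le, decRearr_le_iff hf hu hs, not_le]

theorem lintegral_max_decRearr_sub (hfm : AEMeasurable f ν)
    (hf : Tendsto (distribution ν f) atTop (𝓝 0)) (ht : 0 ≤ t) :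
    ∫⁻ u in Ioi 0, ENNReal.ofReal (max (decRearr ν f u - t) 0) =
      ∫⁻ x, ENNReal.ofReal (max (|f x| - t) 0) ∂ν := by
  have hlt : ∀ {s a : ℝ}, 0 < s → (s < max (a - t) 0 ↔ s + t < a) := fun hs => by
    rw [lt_max_iff, lt_sub_iff_add_lt, or_iff_left hs.not_gt]
  have hrearr : AEMeasurable (decRearr ν f) (volume.restrict (Ioi 0)) :=
    aemeasurable_restrict_of_antitoneOn measurableSet_Ioi (antitoneOn_decRearr hf)
  have hrearr' : AEMeasurable (fun u => max (decRearr ν f u - t) 0) (volume.restrict (Ioi 0)) :=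
    (hrearr.sub_const t).max aemeasurable_const
  have hfm' : AEMeasurable (fun x => max (|f x| - t) 0) ν :=
    (hfm.abs.sub_const t).max aemeasurable_const
  rw [lintegral_eq_lintegral_meas_lt (f := fun u => max (decRearr ν f u - t) 0) _
      (ae_of_all _ fun _ => le_max_right _ _) hrearr',
    lintegral_eq_lintegral_meas_lt (f := fun x => max (|f x| - t) 0) _
      (ae_of_all _ fun _ => le_max_right _ _) hfm']
  refine setLIntegral_congr_fun measurableSet_Ioi fun s hs => ?_
  simp only [hlt hs]
  rw [Measure.restrict_apply' measurableSet_Ioi, inter_comm]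
  exact volume_lt_decRearr hf (add_pos_of_pos_of_nonneg hs ht)

theorem lintegral_max_decRearr_sub_of_nonneg (hfm : AEMeasurable f ν) (hf0 : ∀ x, 0 ≤ f x)
    (hf : Tendsto (distribution ν f) atTop (𝓝 0)) (ht : 0 ≤ t) :
    ∫⁻ u in Ioi 0, ENNReal.ofReal (max (decRearr ν f u - t) 0) =
      ∫⁻ x, ENNReal.ofReal (max (f x - t) 0) ∂ν := by
  simpa only [abs_of_nonneg, hf0] using lintegral_max_decRearr_sub hfm hf ht

end Rearrangement

theorem stmt_12_general {α : Type*} [MeasurableSpace α] (μ : Measure α)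
    (f g : α → ℝ) (hfm : Measurable f) (hgm : Measurable g)
    (hf0 : ∀ x, 0 ≤ f x) (hg0 : ∀ x, 0 ≤ g x)
    (hf : ∃ f₁ f₂ : α → ℝ, f = f₁ + f₂ ∧ MemLp f₁ 1 μ ∧ MemLp f₂ ⊤ μ)
    (hg : ∃ g₁ g₂ : α → ℝ, g = g₁ + g₂ ∧ MemLp g₁ 1 μ ∧ MemLp g₂ ⊤ μ) :
    (∀ s > (0:ℝ),
        ∫⁻ u in Set.Ioo (0:ℝ) s, ENNReal.ofReal (decRearr μ g u) ≤
          ∫⁻ u in Set.Ioo (0:ℝ) s, ENNReal.ofReal (decRearr μ f u)) ↔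
      (∀ t > (0:ℝ),
        ∫⁻ x, ENNReal.ofReal (max (g x - t) 0) ∂μ ≤
          ∫⁻ x, ENNReal.ofReal (max (f x - t) 0) ∂μ) := by
  have hfD : Tendsto (distribution μ f) atTop (𝓝 0) := by
    obtain ⟨f₁, f₂, rfl, hf₁, hf₂⟩ := hf
    exact tendsto_distribution_of_memLp_one_add_top hf₁ hf₂
  have hgD : Tendsto (distribution μ g) atTop (𝓝 0) := by
    obtain ⟨g₁, g₂, rfl, hg₁, hg₂⟩ := hg
    exact tendsto_distribution_of_memLp_one_add_top hg₁ hg₂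
  have hlayerF := fun t (ht : 0 ≤ t) =>
    lintegral_max_decRearr_sub_of_nonneg hfm.aemeasurable hf0 hfD ht
  have hlayerG := fun t (ht : 0 ≤ t) =>
    lintegral_max_decRearr_sub_of_nonneg hgm.aemeasurable hg0 hgD ht
  constructor
  · intro H t ht
    rw [← hlayerG t ht.le, ← hlayerF t ht.le,
      lintegral_max_sub_eq_iSup (antitoneOn_decRearr hgD) ht.le,
      lintegral_max_sub_eq_iSup (antitoneOn_decRearr hfD) ht.le]
    exact iSup₂_mono fun s hs => tsub_le_tsub_right (H s hs) _
  · intro H s hs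
    rw [setLIntegral_Ioo_eq_iInf (antitoneOn_decRearr hgD) hs (decRearr_nonneg s),
      setLIntegral_Ioo_eq_iInf (antitoneOn_decRearr hfD) hs (decRearr_nonneg s)]
    refine iInf₂_mono fun t ht => add_le_add_right ?_ _
    rw [hlayerG t ht.le, hlayerF t ht.le]
    exact H t ht

theorem stmt_12 {α : Type*} [MeasurableSpace α] (μ : Measure α) [SigmaFinite μ]
    (f g : α → ℝ) (hfm : Measurable f) (hgm : Measurable g)
    (hf0 : ∀ x, 0 ≤ f x) (hg0 : ∀ x, 0 ≤ g x)
    (hf : ∃ f₁ f₂ : α → ℝ, f = f₁ + f₂ ∧ MemLp f₁ 1 μ ∧ MemLp f₂ ⊤ μ)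
    (hg : ∃ g₁ g₂ : α → ℝ, g = g₁ + g₂ ∧ MemLp g₁ 1 μ ∧ MemLp g₂ ⊤ μ) :
    (∀ s > (0:ℝ),
        ∫⁻ u in Set.Ioo (0:ℝ) s, ENNReal.ofReal (decRearr μ g u) ≤
          ∫⁻ u in Set.Ioo (0:ℝ) s, ENNReal.ofReal (decRearr μ f u)) ↔
      (∀ t > (0:ℝ),
        ∫⁻ x, ENNReal.ofReal (max (g x - t) 0) ∂μ ≤
          ∫⁻ x, ENNReal.ofReal (max (f x - t) 0) ∂μ) :=
  stmt_12_general μ f g hfm hgm hf0 hg0 hf hg
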